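/- Let ℓ ≥ 1 be an integer and assume X_{ℓ-1}⁺ = S. Fix an integer k with 0 < k ≤ ℓ, an integer m ≥ 1 with k − m ≥ 0, and an integer l with 0 < l ≤ k − m + 1. For 0 ≤ j ≤ l define H_j = X_{j-1}(X_j ∩ Y_{k-j}) and J_j = X_{j-1}(X_j ∩ Y_{k-j-m}), and define H_{[0,l]} = {(b₀,…,b_l) ∈ B^{l+1} : b_j ∈ H_j for all 0 ≤ j ≤ l, and b_j⁺ = b_{j+1}⁻ for all 0 ≤ j < l}, and J_{[0,l]} analogously with J_j in place of H_j. Then H_{[0,l]} and J_{[0,l]} are subgroups of the direct product B^{l+1}, J_{[0,l]} is a normal subgroup of H_{[0,l]}, and there is a group isomorphism H_{[0,l]} / J_{[0,l]} ≅ H₀ / J₀. -/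
import Mathlib


open Pointwise

namespace GroupCodes

variable {S : Type*} [Group S]

/-- The subgroups `Xₙ` of the branch group `B ≤ S × S`: `X₀ = {b ∈ B : b⁻ = 1}` and
`X_{n+1} = {b ∈ B : b⁻ ∈ Xₙ⁺}` (here `b⁻ = b.1`, `b⁺ = b.2`, `U⁺ = snd '' U`). -/
def Xnat (B : Subgroup (S × S)) : ℕ → Subgroup (S × S)
  | 0 => B ⊓ (MonoidHom.fst S S).ker
  | n + 1 => B ⊓ (Subgroup.map (MonoidHom.snd S S) (Xnat B n)).comap (MonoidHom.fst S S)

/-- The subgroups `Yₙ` of the branch group `B ≤ S × S`: `Y₀ = {b ∈ B : b⁺ = 1}` and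
`Y_{n+1} = {b ∈ B : b⁺ ∈ Yₙ⁻}`. -/
def Ynat (B : Subgroup (S × S)) : ℕ → Subgroup (S × S)
  | 0 => B ⊓ (MonoidHom.snd S S).ker
  | n + 1 => B ⊓ (Subgroup.map (MonoidHom.fst S S) (Ynat B n)).comap (MonoidHom.snd S S)

/-- `X i` for an integer index `i`, trivial for `i < 0`. -/
def X (B : Subgroup (S × S)) (i : ℤ) : Subgroup (S × S) :=
  if i < 0 then ⊥ else Xnat B i.toNat

/-- `Y i` for an integer index `i`, trivial for `i < 0`. -/
def Y (B : Subgroup (S × S)) (i : ℤ) : Subgroup (S × S) :=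
  if i < 0 then ⊥ else Ynat B i.toNat

/-- The next-branch set `N(U) = {b ∈ B : b⁻ ∈ U⁺}`. -/
def N (B U : Subgroup (S × S)) : Subgroup (S × S) :=
  B ⊓ (Subgroup.map (MonoidHom.snd S S) U).comap (MonoidHom.fst S S)

/-- The previous-branch set `P(U) = {b ∈ B : b⁺ ∈ U⁻}`. -/
def P (B U : Subgroup (S × S)) : Subgroup (S × S) :=
  B ⊓ (Subgroup.map (MonoidHom.fst S S) U).comap (MonoidHom.snd S S)

/-- `IsQuotIso J H J' H'` says that `J` (viewed inside `H`) is normal in `H`, `J'` is normal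
in `H'`, and there is a group isomorphism `H / J ≅ H' / J'`. -/
def IsQuotIso {G₁ G₂ : Type*} [Group G₁] [Group G₂]
    (J H : Subgroup G₁) (J' H' : Subgroup G₂) : Prop :=
  (J.subgroupOf H).Normal ∧ (J'.subgroupOf H').Normal ∧
    ∀ [(J.subgroupOf H).Normal] [(J'.subgroupOf H').Normal],
      Nonempty ((H ⧸ J.subgroupOf H) ≃* (H' ⧸ J'.subgroupOf H'))

/-- `T` is a right transversal of `J` inside `H`: `T ⊆ H` and `T` meets every right coset
of `J` contained in `H` in exactly one element. -/
def IsRightTransversalIn {G : Type*} [Group G] (J H : Subgroup G) (T : Set G) : Prop :=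
  T ⊆ (H : Set G) ∧ ∀ h ∈ H, ∃! t, t ∈ T ∧ t * h⁻¹ ∈ J

/-- The group of trellis path segments `(b₀, …, bₙ)` with `b_j ∈ F j` and matching states
`b_j⁺ = b_{j+1}⁻`; a subgroup of the direct product `(S × S)^{n+1}`. -/
def chainSubgroup (n : ℕ) (F : ℤ → Subgroup (S × S)) : Subgroup (Fin (n + 1) → S × S) where
  carrier := {b | (∀ i : Fin (n + 1), b i ∈ F (i : ℤ)) ∧
    ∀ i : Fin n, (b i.castSucc).2 = (b i.succ).1}
  one_mem' := ⟨fun _ => one_mem _, fun _ => rfl⟩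
  mul_mem' := by
    rintro a b ⟨ha1, ha2⟩ ⟨hb1, hb2⟩
    refine ⟨fun i => mul_mem (ha1 i) (hb1 i), fun i => ?_⟩
    simp only [Pi.mul_apply, Prod.snd_mul, Prod.fst_mul, ha2 i, hb2 i]
  inv_mem' := by
    rintro a ⟨ha1, ha2⟩
    refine ⟨fun i => inv_mem (ha1 i), fun i => ?_⟩
    simp only [Pi.inv_apply, Prod.snd_inv, Prod.fst_inv, ha2 i]

/-- `U ⨝ N(U)`: the group of trellis path segments `(b, b')` of length two with `b ∈ U`,
`b' ∈ N(U)` and `b⁺ = b'⁻`; a subgroup of the direct product `(S × S) × (S × S)`. -/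
def JoinN (B U : Subgroup (S × S)) : Subgroup ((S × S) × (S × S)) where
  carrier := {p | p.1 ∈ U ∧ p.2 ∈ N B U ∧ p.1.2 = p.2.1}
  one_mem' := ⟨one_mem _, one_mem _, rfl⟩
  mul_mem' := by
    rintro a b ⟨ha1, ha2, ha3⟩ ⟨hb1, hb2, hb3⟩
    exact ⟨mul_mem ha1 hb1, mul_mem ha2 hb2, by
      simp only [Prod.fst_mul, Prod.snd_mul, ha3, hb3]⟩
  inv_mem' := by
    rintro a ⟨ha1, ha2, ha3⟩
    exact ⟨inv_mem ha1, inv_mem ha2, by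
      simp only [Prod.fst_inv, Prod.snd_inv, ha3]⟩

/-- `H_j = X_{j-1}(X_j ∩ Y_{k-j})` (as a subgroup, realized as the join). -/
def HH (B : Subgroup (S × S)) (k j : ℤ) : Subgroup (S × S) :=
  X B (j - 1) ⊔ (X B j ⊓ Y B (k - j))

/-- `J_j = X_{j-1}(X_j ∩ Y_{k-j-m})` (as a subgroup, realized as the join). -/
def JJ (B : Subgroup (S × S)) (k m j : ℤ) : Subgroup (S × S) :=
  X B (j - 1) ⊔ (X B j ⊓ Y B (k - j - m))

section Aux

variable {G : Type*} [Group G]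

/-- `A` is normalized by `K`. -/
def NormalIn (K A : Subgroup G) : Prop := ∀ b ∈ K, ∀ a ∈ A, b * a * b⁻¹ ∈ A

lemma mem_sup_iff' {A C K : Subgroup G} (hA : A ≤ K) (hC : C ≤ K) (hN : NormalIn K A) {g : G} :
    g ∈ A ⊔ C ↔ ∃ a ∈ A, ∃ c ∈ C, g = a * c := by
  constructor
  · intro hg
    let P : Subgroup G := {
      carrier := {g | ∃ a ∈ A, ∃ c ∈ C, g = a * c}
      one_mem' := ⟨1, one_mem _, 1, one_mem _, (one_mul 1).symm⟩
      mul_mem' := by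
        rintro p q ⟨a, ha, c, hc, rfl⟩ ⟨a', ha', c', hc', rfl⟩
        exact ⟨a * (c * a' * c⁻¹), mul_mem ha (hN c (hC hc) a' ha'), c * c',
          mul_mem hc hc', by group⟩
      inv_mem' := by
        rintro p ⟨a, ha, c, hc, rfl⟩
        exact ⟨c⁻¹ * a⁻¹ * c⁻¹⁻¹, hN c⁻¹ (inv_mem (hC hc)) a⁻¹ (inv_mem ha), c⁻¹,
          inv_mem hc, by group⟩ }
    have hle : A ⊔ C ≤ P := sup_le (fun a ha => ⟨a, ha, 1, one_mem _, (mul_one a).symm⟩)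
      (fun c hc => ⟨1, one_mem _, c, hc, (one_mul c).symm⟩)
    exact hle hg
  · rintro ⟨a, ha, c, hc, rfl⟩
    exact mul_mem ((le_sup_left : A ≤ A ⊔ C) ha) ((le_sup_right : C ≤ A ⊔ C) hc)

lemma NormalIn.inf {A A' K : Subgroup G} (h : NormalIn K A) (h' : NormalIn K A') :
    NormalIn K (A ⊓ A') := fun b hb a ha => ⟨h b hb a ha.1, h' b hb a ha.2⟩

lemma NormalIn.sup {A C K : Subgroup G} (hA : A ≤ K) (hC : C ≤ K) (hNA : NormalIn K A)
    (hNC : NormalIn K C) : NormalIn K (A ⊔ C) := by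
  intro b hb g hg
  rw [mem_sup_iff' hA hC hNA] at hg ⊢
  obtain ⟨a, ha, c, hc, rfl⟩ := hg
  exact ⟨b * a * b⁻¹, hNA b hb a ha, b * c * b⁻¹, hNC b hb c hc, by group⟩

lemma NormalIn.bot {K : Subgroup G} : NormalIn K (⊥ : Subgroup G) := by
  intro b hb a ha
  simp only [Subgroup.mem_bot] at ha ⊢
  simp [ha]

lemma NormalIn.mono_left {A K K' : Subgroup G} (h : NormalIn K A) (hK : K' ≤ K) :
    NormalIn K' A := fun b hb => h b (hK hb)

lemma NormalIn.subgroupOf_normal {A K : Subgroup G} (h : NormalIn K A) :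
    (A.subgroupOf K).Normal := by
  constructor
  intro n hn g
  rw [Subgroup.mem_subgroupOf] at hn ⊢
  simpa using h g g.2 n hn

end Aux

section XY

variable (B : Subgroup (S × S))

lemma Xnat_le_B : ∀ n, Xnat B n ≤ B
  | 0 => inf_le_left
  | n + 1 => inf_le_left

lemma Ynat_le_B : ∀ n, Ynat B n ≤ B
  | 0 => inf_le_left
  | n + 1 => inf_le_left

variable {B}

lemma mem_Xnat_zero {b : S × S} : b ∈ Xnat B 0 ↔ b ∈ B ∧ b.1 = 1 := Iff.rfl

lemma mem_Ynat_zero {b : S × S} : b ∈ Ynat B 0 ↔ b ∈ B ∧ b.2 = 1 := Iff.rfl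

lemma mem_Xnat_succ {n : ℕ} {b : S × S} :
    b ∈ Xnat B (n + 1) ↔ b ∈ B ∧ ∃ c ∈ Xnat B n, c.2 = b.1 := by
  simp [Xnat, Subgroup.mem_inf, Subgroup.mem_comap, Subgroup.mem_map]

lemma mem_Ynat_succ {n : ℕ} {b : S × S} :
    b ∈ Ynat B (n + 1) ↔ b ∈ B ∧ ∃ c ∈ Ynat B n, c.1 = b.2 := by
  simp [Ynat, Subgroup.mem_inf, Subgroup.mem_comap, Subgroup.mem_map]

lemma normalIn_Xnat (hB2 : Subgroup.map (MonoidHom.snd S S) B = ⊤) :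
    ∀ n, NormalIn B (Xnat B n) := by
  intro n
  induction n with
  | zero =>
    intro b hb a ha
    rw [mem_Xnat_zero] at ha ⊢
    refine ⟨mul_mem (mul_mem hb (Xnat_le_B B 0 (mem_Xnat_zero.2 ha))) (inv_mem hb), ?_⟩
    simp [ha.2]
  | succ n ih =>
    intro b hb a ha
    rw [mem_Xnat_succ] at ha ⊢
    obtain ⟨haB, c, hc, hc2⟩ := ha
    obtain ⟨d, hd, hd2⟩ : ∃ d ∈ B, d.2 = b.1 := by
      have : b.1 ∈ Subgroup.map (MonoidHom.snd S S) B := by rw [hB2]; trivial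
      simpa using this
    refine ⟨mul_mem (mul_mem hb haB) (inv_mem hb), d * c * d⁻¹, ih d hd c hc, ?_⟩
    simp [hc2, hd2]

lemma normalIn_Ynat (hB1 : Subgroup.map (MonoidHom.fst S S) B = ⊤) :
    ∀ n, NormalIn B (Ynat B n) := by
  intro n
  induction n with
  | zero =>
    intro b hb a ha
    rw [mem_Ynat_zero] at ha ⊢
    refine ⟨mul_mem (mul_mem hb (Ynat_le_B B 0 (mem_Ynat_zero.2 ha))) (inv_mem hb), ?_⟩
    simp [ha.2]
  | succ n ih =>
    intro b hb a ha
    rw [mem_Ynat_succ] at ha ⊢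
    obtain ⟨haB, c, hc, hc1⟩ := ha
    obtain ⟨d, hd, hd1⟩ : ∃ d ∈ B, d.1 = b.2 := by
      have : b.2 ∈ Subgroup.map (MonoidHom.fst S S) B := by rw [hB1]; trivial
      simpa using this
    refine ⟨mul_mem (mul_mem hb haB) (inv_mem hb), d * c * d⁻¹, ih d hd c hc, ?_⟩
    simp [hc1, hd1]

lemma Xnat_mono : Monotone (Xnat B) := by
  apply monotone_nat_of_le_succ
  intro n
  induction n with
  | zero =>
    intro b hb
    rw [mem_Xnat_zero] at hb
    exact mem_Xnat_succ.2 ⟨hb.1, 1, one_mem _, by simp [hb.2]⟩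
  | succ n ih =>
    intro b hb
    rw [mem_Xnat_succ] at hb ⊢
    obtain ⟨hbB, c, hc, hc2⟩ := hb
    exact ⟨hbB, c, ih hc, hc2⟩

lemma Ynat_mono : Monotone (Ynat B) := by
  apply monotone_nat_of_le_succ
  intro n
  induction n with
  | zero =>
    intro b hb
    rw [mem_Ynat_zero] at hb
    exact mem_Ynat_succ.2 ⟨hb.1, 1, one_mem _, by simp [hb.2]⟩
  | succ n ih =>
    intro b hb
    rw [mem_Ynat_succ] at hb ⊢
    obtain ⟨hbB, c, hc, hc1⟩ := hb
    exact ⟨hbB, c, ih hc, hc1⟩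

lemma X_eq {i : ℤ} (hi : 0 ≤ i) : X B i = Xnat B i.toNat := if_neg (by omega)

lemma X_eq_bot {i : ℤ} (hi : i < 0) : X B i = ⊥ := if_pos hi

lemma Y_eq {i : ℤ} (hi : 0 ≤ i) : Y B i = Ynat B i.toNat := if_neg (by omega)

lemma Y_eq_bot {i : ℤ} (hi : i < 0) : Y B i = ⊥ := if_pos hi

lemma X_le_B {i : ℤ} : X B i ≤ B := by
  rcases lt_or_ge i 0 with h | h
  · rw [X_eq_bot h]; exact bot_le
  · rw [X_eq h]; exact Xnat_le_B B _

lemma Y_le_B {i : ℤ} : Y B i ≤ B := by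
  rcases lt_or_ge i 0 with h | h
  · rw [Y_eq_bot h]; exact bot_le
  · rw [Y_eq h]; exact Ynat_le_B B _

lemma X_mono {i j : ℤ} (h : i ≤ j) : X B i ≤ X B j := by
  rcases lt_or_ge i 0 with hi | hi
  · rw [X_eq_bot hi]; exact bot_le
  · rw [X_eq hi, X_eq (le_trans hi h)]
    exact Xnat_mono (by omega)

lemma Y_mono {i j : ℤ} (h : i ≤ j) : Y B i ≤ Y B j := by
  rcases lt_or_ge i 0 with hi | hi
  · rw [Y_eq_bot hi]; exact bot_le
  · rw [Y_eq hi, Y_eq (le_trans hi h)]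
    exact Ynat_mono (by omega)

lemma normalIn_X (hB2 : Subgroup.map (MonoidHom.snd S S) B = ⊤) (i : ℤ) :
    NormalIn B (X B i) := by
  rcases lt_or_ge i 0 with h | h
  · rw [X_eq_bot h]; exact NormalIn.bot
  · rw [X_eq h]; exact normalIn_Xnat hB2 _

lemma normalIn_Y (hB1 : Subgroup.map (MonoidHom.fst S S) B = ⊤) (i : ℤ) :
    NormalIn B (Y B i) := by
  rcases lt_or_ge i 0 with h | h
  · rw [Y_eq_bot h]; exact NormalIn.bot
  · rw [Y_eq h]; exact normalIn_Ynat hB1 _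

lemma mem_X_zero {b : S × S} : b ∈ X B 0 ↔ b ∈ B ∧ b.1 = 1 := by
  rw [X_eq le_rfl]; exact mem_Xnat_zero

lemma mem_Y_zero {b : S × S} : b ∈ Y B 0 ↔ b ∈ B ∧ b.2 = 1 := by
  rw [Y_eq le_rfl]; exact mem_Ynat_zero

/-- Key constructor: if `c ∈ X_{j-1}` and `b ∈ B` with `c⁺ = b⁻` then `b ∈ X_j`. -/
lemma mem_X_of {j : ℤ} (hj : 0 ≤ j) {b c : S × S} (hb : b ∈ B) (hc : c ∈ X B (j - 1))
    (hcb : c.2 = b.1) : b ∈ X B j := by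
  rcases eq_or_lt_of_le hj with h0 | h0
  · rw [X_eq_bot (by omega)] at hc
    rw [Subgroup.mem_bot] at hc
    rw [← h0, mem_X_zero]
    exact ⟨hb, by rw [← hcb, hc]; rfl⟩
  · rw [X_eq (by omega)] at hc ⊢
    have : j.toNat = (j - 1).toNat + 1 := by omega
    rw [this, mem_Xnat_succ]
    exact ⟨hb, c, hc, hcb⟩

/-- Key destructor: if `c ∈ Y_n`, `1 ≤ n`, then `∃ g ∈ Y_{n-1}, g⁻ = c⁺`. -/
lemma exists_of_mem_Y {n : ℤ} (hn : 1 ≤ n) {c : S × S} (hc : c ∈ Y B n) :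
    ∃ g ∈ Y B (n - 1), g.1 = c.2 := by
  rw [Y_eq (by omega)] at hc
  have : n.toNat = (n - 1).toNat + 1 := by omega
  rw [this, mem_Ynat_succ] at hc
  obtain ⟨-, g, hg, hg1⟩ := hc
  exact ⟨g, by rw [Y_eq (by omega)]; exact hg, hg1⟩

end XY


section Step

variable {B : Subgroup (S × S)}

/-- The key step lemma: if `a ∈ X_{j-1}(X_j ∩ Y_n)` with `j, n ≥ 0`, and `b ∈ B` has
`b⁻ = a⁺`, then `b ∈ X_j (X_{j+1} ∩ Y_{n-1})`. -/
lemma step_lemma (hB1 : Subgroup.map (MonoidHom.fst S S) B = ⊤)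
    (hB2 : Subgroup.map (MonoidHom.snd S S) B = ⊤)
    {j n : ℤ} (hj : 0 ≤ j) (hn : 0 ≤ n) {a b : S × S}
    (ha : a ∈ X B (j - 1) ⊔ (X B j ⊓ Y B n)) (hb : b ∈ B) (hab : a.2 = b.1) :
    b ∈ X B j ⊔ (X B (j + 1) ⊓ Y B (n - 1)) := by
  have hXle : X B (j - 1) ≤ B := X_le_B
  have hCle : X B j ⊓ Y B n ≤ B := le_trans inf_le_left X_le_B
  rw [mem_sup_iff' hXle hCle (normalIn_X hB2 _)] at ha
  obtain ⟨x, hx, c, hc, rfl⟩ := ha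
  -- pick e ∈ B with e⁻ = x⁺; then e ∈ X_j
  obtain ⟨e, he, he1⟩ : ∃ e ∈ B, e.1 = x.2 := by
    have : x.2 ∈ Subgroup.map (MonoidHom.fst S S) B := by rw [hB1]; trivial
    simpa using this
  have heX : e ∈ X B j := mem_X_of hj he hx he1.symm
  -- f := e⁻¹ * b has f⁻ = c⁺, hence f ∈ X_{j+1}
  have hfB : e⁻¹ * b ∈ B := mul_mem (inv_mem he) hb
  have hf1 : (e⁻¹ * b).1 = c.2 := by
    have : b.1 = x.2 * c.2 := by rw [← hab]; rfl
    simp [this, he1]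
  have hfX : e⁻¹ * b ∈ X B (j + 1) := by
    refine mem_X_of (by omega) hfB (c := c) ?_ hf1.symm
    rw [show j + 1 - 1 = j by ring]
    exact hc.1
  rcases eq_or_lt_of_le hn with h0 | h0
  · -- n = 0 : c⁺ = 1 so f ∈ X₀ ≤ X_j, b = e * f ∈ X_j
    have hc2 : c.2 = 1 := (mem_Y_zero.1 (h0 ▸ hc.2)).2
    have : e⁻¹ * b ∈ X B 0 := mem_X_zero.2 ⟨hfB, by rw [hf1, hc2]⟩
    have hbX : b ∈ X B j := by
      have := mul_mem heX (X_mono hj this)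
      simpa using this
    exact (le_sup_left : X B j ≤ _) hbX
  · -- n ≥ 1 : get g ∈ Y_{n-1} with g⁻ = c⁺ = f⁻
    obtain ⟨g, hg, hg1⟩ := exists_of_mem_Y (by omega) hc.2
    have hgB : g ∈ B := Y_le_B hg
    have hhX : g⁻¹ * (e⁻¹ * b) ∈ X B 0 := by
      refine mem_X_zero.2 ⟨mul_mem (inv_mem hgB) hfB, ?_⟩
      simp [hf1, hg1]
    -- h' := g * (g⁻¹ f) * g⁻¹ ∈ X₀
    have hh'X : g * (g⁻¹ * (e⁻¹ * b)) * g⁻¹ ∈ X B 0 := normalIn_X hB2 0 g hgB _ hhX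
    have hgX : g ∈ X B (j + 1) := by
      have h1 : (g * (g⁻¹ * (e⁻¹ * b)) * g⁻¹)⁻¹ * (e⁻¹ * b) = g := by group
      have := mul_mem (X_mono (show (0:ℤ) ≤ j + 1 by omega) (inv_mem hh'X)) hfX
      rwa [h1] at this
    rw [mem_sup_iff' (X_le_B) (le_trans inf_le_left X_le_B) (normalIn_X hB2 _)]
    refine ⟨e * (g * (g⁻¹ * (e⁻¹ * b)) * g⁻¹),
      mul_mem heX (X_mono hj hh'X), g, ⟨hgX, hg⟩, by group⟩

end Step

lemma mem_chainSubgroup {n : ℕ} {F : ℤ → Subgroup (S × S)} {b : Fin (n + 1) → S × S} :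
    b ∈ chainSubgroup n F ↔ (∀ i : Fin (n + 1), b i ∈ F (i : ℤ)) ∧
      ∀ i : Fin n, (b i.castSucc).2 = (b i.succ).1 := Iff.rfl

/-- the path-segment groups `H_{[0,l]}` and `J_{[0,l]}` are subgroups of
`B^{l+1}`, `J_{[0,l]} ⊴ H_{[0,l]}`, and `H_{[0,l]} / J_{[0,l]} ≅ H₀ / J₀`. -/
theorem path_segment_groups_quot_iso
    (B : Subgroup (S × S))
    (hB1 : Subgroup.map (MonoidHom.fst S S) B = ⊤)
    (hB2 : Subgroup.map (MonoidHom.snd S S) B = ⊤)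
    (ℓ k m l : ℤ) (hℓ : 1 ≤ ℓ)
    (hctl : Subgroup.map (MonoidHom.snd S S) (X B (ℓ - 1)) = ⊤)
    (hk0 : 0 < k) (hkℓ : k ≤ ℓ)
    (hm : 1 ≤ m) (hkm : 0 ≤ k - m)
    (hl0 : 0 < l) (hl : l ≤ k - m + 1) :
    chainSubgroup l.toNat (HH B k) ≤ Subgroup.pi Set.univ (fun _ => B) ∧
    chainSubgroup l.toNat (JJ B k m) ≤ Subgroup.pi Set.univ (fun _ => B) ∧
    chainSubgroup l.toNat (JJ B k m) ≤ chainSubgroup l.toNat (HH B k) ∧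
    IsQuotIso (chainSubgroup l.toNat (JJ B k m)) (chainSubgroup l.toNat (HH B k))
      (JJ B k m 0) (HH B k 0) := by
  set L := l.toNat with hLdef
  have hLl : (L : ℤ) = l := Int.toNat_of_nonneg (by omega)
  have hHHle : ∀ j : ℤ, HH B k j ≤ B :=
    fun j => sup_le X_le_B (le_trans inf_le_left X_le_B)
  have hJJle : ∀ j : ℤ, JJ B k m j ≤ B :=
    fun j => sup_le X_le_B (le_trans inf_le_left X_le_B)
  have hJH : ∀ j : ℤ, JJ B k m j ≤ HH B k j := by
    intro j
    refine sup_le le_sup_left (le_trans ?_ le_sup_right)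
    exact inf_le_inf_left _ (Y_mono (by omega))
  have hNH : ∀ j : ℤ, NormalIn B (HH B k j) := fun j =>
    NormalIn.sup X_le_B (le_trans inf_le_left X_le_B) (normalIn_X hB2 _)
      ((normalIn_X hB2 _).inf (normalIn_Y hB1 _))
  have hNJ : ∀ j : ℤ, NormalIn B (JJ B k m j) := fun j =>
    NormalIn.sup X_le_B (le_trans inf_le_left X_le_B) (normalIn_X hB2 _)
      ((normalIn_X hB2 _).inf (normalIn_Y hB1 _))
  have hchainH : chainSubgroup L (HH B k) ≤ Subgroup.pi Set.univ (fun _ => B) := by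
    intro b hb
    rw [Subgroup.mem_pi]
    exact fun i _ => hHHle _ (hb.1 i)
  have hchainJ : chainSubgroup L (JJ B k m) ≤ Subgroup.pi Set.univ (fun _ => B) := by
    intro b hb
    rw [Subgroup.mem_pi]
    exact fun i _ => hJJle _ (hb.1 i)
  have hchainJH : chainSubgroup L (JJ B k m) ≤ chainSubgroup L (HH B k) :=
    fun b hb => ⟨fun i => hJH _ (hb.1 i), hb.2⟩
  refine ⟨hchainH, hchainJ, hchainJH, ?_⟩
  -- normality of the J-chain in the H-chain
  have hNchain : NormalIn (chainSubgroup L (HH B k)) (chainSubgroup L (JJ B k m)) := by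
    intro g hg a ha
    refine ⟨fun i => ?_, fun i => ?_⟩
    · show (g i) * (a i) * (g i)⁻¹ ∈ JJ B k m i
      exact hNJ _ _ (hHHle _ (hg.1 i)) _ (ha.1 i)
    · show ((g * a * g⁻¹) i.castSucc).2 = ((g * a * g⁻¹) i.succ).1
      simp only [Pi.mul_apply, Pi.inv_apply, Prod.snd_mul, Prod.fst_mul, Prod.snd_inv,
        Prod.fst_inv, hg.2 i, ha.2 i]
  have n1 : ((chainSubgroup L (JJ B k m)).subgroupOf (chainSubgroup L (HH B k))).Normal :=
    hNchain.subgroupOf_normal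
  have n2 : ((JJ B k m 0).subgroupOf (HH B k 0)).Normal :=
    ((hNJ 0).mono_left (hHHle 0)).subgroupOf_normal
  refine ⟨n1, n2, ?_⟩
  intro _ _
  haveI := n1
  haveI := n2
  -- the homomorphism to H₀ / J₀
  have hmem0 : ∀ b ∈ chainSubgroup L (HH B k), b ⟨0, Nat.succ_pos L⟩ ∈ HH B k 0 := by
    intro b hb
    have := hb.1 ⟨0, Nat.succ_pos L⟩
    simpa using this
  let φ : chainSubgroup L (HH B k) →* (HH B k 0) ⧸ (JJ B k m 0).subgroupOf (HH B k 0) :=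
    { toFun := fun b => QuotientGroup.mk ⟨(b : Fin (L + 1) → S × S) ⟨0, Nat.succ_pos L⟩,
        hmem0 b b.2⟩
      map_one' := rfl
      map_mul' := fun a b => rfl }
  -- surjectivity
  obtain ⟨σ, hσB, hσ1⟩ : ∃ σ : S → S × S, (∀ s, σ s ∈ B) ∧ ∀ s, (σ s).1 = s := by
    have hsec : ∀ s : S, ∃ b : S × S, b ∈ B ∧ b.1 = s := by
      intro s
      have : s ∈ Subgroup.map (MonoidHom.fst S S) B := by rw [hB1]; trivial
      simpa using this
    exact ⟨fun s => (hsec s).choose, fun s => (hsec s).choose_spec.1,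
      fun s => (hsec s).choose_spec.2⟩
  have hsurj : Function.Surjective φ := by
    intro q
    induction q using QuotientGroup.induction_on with
    | H h =>
      set f : ℕ → S × S := fun n => Nat.rec (h : S × S) (fun _ p => σ p.2) n with hfdef
      have hfsucc : ∀ n : ℕ, f (n + 1) = σ (f n).2 := fun n => rfl
      have hmem : ∀ n : ℕ, n ≤ L → f n ∈ HH B k n := by
        intro n
        induction n with
        | zero =>
          intro _
          exact h.2
        | succ n ih =>
          intro hn
          have h1 : f n ∈ HH B k n := ih (by omega)
          have hjn : (0 : ℤ) ≤ (n : ℤ) := by positivity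
          have hkn : (0 : ℤ) ≤ k - n := by
            have : (n : ℤ) + 1 ≤ l := by omega
            omega
          have hstep := step_lemma hB1 hB2 hjn hkn (a := f n) (b := f (n + 1)) h1
            (by rw [hfsucc]; exact hσB _) (by rw [hfsucc, hσ1])
          have hcast : ((n + 1 : ℕ) : ℤ) = (n : ℤ) + 1 := by push_cast; ring
          rw [hcast]
          show f (n + 1) ∈ X B ((n : ℤ) + 1 - 1) ⊔ (X B ((n : ℤ) + 1) ⊓ Y B (k - ((n : ℤ) + 1)))
          rw [show (n : ℤ) + 1 - 1 = (n : ℤ) by ring,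
            show k - ((n : ℤ) + 1) = k - (n : ℤ) - 1 by ring]
          exact hstep
      refine ⟨⟨fun i => f i, ⟨fun i => hmem i (by omega), fun i => ?_⟩⟩, ?_⟩
      · exact (by rw [hfsucc, hσ1] : (f ((i : ℕ) + 1)).1 = (f (i : ℕ)).2).symm
      · exact congrArg QuotientGroup.mk (Subtype.ext rfl)
  -- the kernel
  have hker : MonoidHom.ker φ =
      (chainSubgroup L (JJ B k m)).subgroupOf (chainSubgroup L (HH B k)) := by
    ext b
    rw [MonoidHom.mem_ker, Subgroup.mem_subgroupOf]
    have hφ : φ b = 1 ↔ (b : Fin (L + 1) → S × S) ⟨0, Nat.succ_pos L⟩ ∈ JJ B k m 0 := by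
      rw [show φ b = QuotientGroup.mk ⟨(b : Fin (L + 1) → S × S) ⟨0, Nat.succ_pos L⟩,
        hmem0 b b.2⟩ from rfl, QuotientGroup.eq_one_iff, Subgroup.mem_subgroupOf]
    rw [hφ]
    constructor
    · intro hb0
      have hmem : ∀ n : ℕ, ∀ hn : n < L + 1,
          (b : Fin (L + 1) → S × S) ⟨n, hn⟩ ∈ JJ B k m n := by
        intro n
        induction n with
        | zero =>
          intro _
          simpa using hb0
        | succ n ih =>
          intro hn
          have h1 := ih (by omega)
          have hjn : (0 : ℤ) ≤ (n : ℤ) := by positivity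
          have hkn : (0 : ℤ) ≤ k - n - m := by
            have : (n : ℤ) + 1 ≤ l := by omega
            omega
          have hmatch := b.2.2 ⟨n, by omega⟩
          have hstep := step_lemma hB1 hB2 hjn hkn
            (a := (b : Fin (L + 1) → S × S) ⟨n, by omega⟩)
            (b := (b : Fin (L + 1) → S × S) ⟨n + 1, hn⟩) h1
            (hHHle _ (b.2.1 ⟨n + 1, hn⟩)) hmatch
          have hcast : ((n + 1 : ℕ) : ℤ) = (n : ℤ) + 1 := by push_cast; ring
          rw [hcast]
          show (b : Fin (L + 1) → S × S) ⟨n + 1, hn⟩ ∈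
            X B ((n : ℤ) + 1 - 1) ⊔ (X B ((n : ℤ) + 1) ⊓ Y B (k - ((n : ℤ) + 1) - m))
          rw [show (n : ℤ) + 1 - 1 = (n : ℤ) by ring,
            show k - ((n : ℤ) + 1) - m = k - (n : ℤ) - m - 1 by ring]
          exact hstep
      exact ⟨fun i => hmem i i.isLt, b.2.2⟩
    · intro hb
      exact hb.1 ⟨0, Nat.succ_pos L⟩
  have e1 := QuotientGroup.quotientKerEquivOfSurjective φ hsurj
  have e2 := QuotientGroup.quotientMulEquivOfEq hker.symm
  exact ⟨e2.trans e1⟩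

end GroupCodes
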